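/- Let G ⊂ ℝ^{n+1} be a set of points, h₀ > 0, α₀ ∈ (0,π), such that for every x ∈ G the open truncated cone Γ_{h₀,α₀}(x) (vertex x, axis e_{n+1}, direction e_{n+1}) is disjoint from G. Partition ℝ^{n+1} into slabs S_ℓ = {X : X_{n+1} ∈ [ℓ h₀/10, (ℓ+1)h₀/10)}, ℓ ∈ ℤ, and let 𝔻 be the dyadic cubes in ℝ^n of a fixed sidelength 2^{-p} with diameter < (h₀/8)tan(α₀/2). Then for each ℓ and each Q ∈ 𝔻 with π⁻¹(Q) ∩ G ∩ S_ℓ ≠ ∅ (π the projection to ℝ^n), the set π⁻¹(Q) ∩ G ∩ S_ℓ is contained in the topological boundary of Ω_{Q,ℓ} = ⋃_{x ∈ π⁻¹(Q) ∩ G ∩ S_ℓ} Γ_{h₀,α₀}(x) ∩ {z_{n+1} < (ℓ+1)h₀/10 + h₀/2}. Consequently G ⊂ ⋃_ℓ ⋃_{Q ∈ 𝔻} ∂Ω_{Q,ℓ}. -/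
import Mathlib


open Metric MeasureTheory Set Filter
open scoped Topology

noncomputable section

/-- The open truncated cone in `ℝ^n × ℝ` with vertex `x`, axis `e_{n+1}`, direction
`e_{n+1}`, height `h` and aperture `α`. -/
def coneP {n : ℕ} (h α : ℝ) (x : EuclideanSpace ℝ (Fin n) × ℝ) :
    Set (EuclideanSpace ℝ (Fin n) × ℝ) :=
  {z | ‖z.1 - x.1‖ < (z.2 - x.2) * Real.tan (α / 2) ∧ x.2 < z.2 ∧ z.2 < x.2 + h}

/-- The closed dyadic cube in `ℝ^n` of sidelength `2^{-p}` indexed by `m ∈ ℤ^n`. -/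
def dyadicCube (n : ℕ) (p : ℕ) (m : Fin n → ℤ) : Set (EuclideanSpace ℝ (Fin n)) :=
  {y | ∀ i, (m i : ℝ) * ((2 : ℝ) ^ p)⁻¹ ≤ y i ∧ y i ≤ ((m i : ℝ) + 1) * ((2 : ℝ) ^ p)⁻¹}

/-- The piece `F_{ℓ} ∩ π⁻¹(Q)` of `G` lying above the cube `Q` and inside the slab
`S_ℓ`. -/
def sliceSet {n : ℕ} (G : Set (EuclideanSpace ℝ (Fin n) × ℝ)) (h₀ : ℝ) (p : ℕ)
    (m : Fin n → ℤ) (ℓ : ℤ) : Set (EuclideanSpace ℝ (Fin n) × ℝ) :=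
  {x ∈ G | x.1 ∈ dyadicCube n p m ∧
    x.2 ∈ Set.Ico ((ℓ : ℝ) * (h₀ / 10)) (((ℓ : ℝ) + 1) * (h₀ / 10))}

/-- The truncated union of cones `Ω_{Q,ℓ}`. -/
def OmQL {n : ℕ} (G : Set (EuclideanSpace ℝ (Fin n) × ℝ)) (h₀ α₀ : ℝ) (p : ℕ)
    (m : Fin n → ℤ) (ℓ : ℤ) : Set (EuclideanSpace ℝ (Fin n) × ℝ) :=
  (⋃ x ∈ sliceSet G h₀ p m ℓ, coneP h₀ α₀ x) ∩
    {z : EuclideanSpace ℝ (Fin n) × ℝ | z.2 < ((ℓ : ℝ) + 1) * (h₀ / 10) + h₀ / 2}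

/-- If the cone at each point of `G` misses `G`, then each slice of `G` lies on the
boundary of the corresponding union of cones `Ω_{Q,ℓ}`, and hence `G` is covered by
the boundaries of the sets `Ω_{Q,ℓ}`. -/
theorem stmt17 {n : ℕ} (G : Set (EuclideanSpace ℝ (Fin n) × ℝ))
    (h₀ α₀ : ℝ) (hh : 0 < h₀) (hα : α₀ ∈ Set.Ioo 0 Real.pi)
    (hcone : ∀ x ∈ G, Disjoint (coneP h₀ α₀ x) G)
    (p : ℕ) (hdiam : Real.sqrt n * ((2 : ℝ) ^ p)⁻¹ < h₀ / 8 * Real.tan (α₀ / 2)) :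
    (∀ (ℓ : ℤ) (m : Fin n → ℤ),
      sliceSet G h₀ p m ℓ ⊆ frontier (OmQL G h₀ α₀ p m ℓ)) ∧
    G ⊆ ⋃ (ℓ : ℤ), ⋃ (m : Fin n → ℤ), frontier (OmQL G h₀ α₀ p m ℓ) := by
  have htan : 0 < Real.tan (α₀ / 2) :=
    Real.tan_pos_of_pos_of_lt_pi_div_two (by linarith [hα.1]) (by linarith [hα.2])
  have main : ∀ (ℓ : ℤ) (m : Fin n → ℤ),
      sliceSet G h₀ p m ℓ ⊆ frontier (OmQL G h₀ α₀ p m ℓ) := by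
    intro ℓ m x hx
    obtain ⟨hxG, hxQ, hxI⟩ := hx
    have hnot : x ∉ OmQL G h₀ α₀ p m ℓ := by
      rintro ⟨hx1, -⟩
      simp only [Set.mem_iUnion] at hx1
      obtain ⟨y, hy, hxy⟩ := hx1
      exact (hcone y hy.1).le_bot ⟨hxy, hxG⟩
    have hbd : x.2 < ((ℓ : ℝ) + 1) * (h₀ / 10) + h₀ / 2 := by
      have := hxI.2; linarith
    have hcl : x ∈ closure (OmQL G h₀ α₀ p m ℓ) := by
      set b : ℝ := min h₀ (((ℓ : ℝ) + 1) * (h₀ / 10) + h₀ / 2 - x.2) with hb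
      have hbpos : 0 < b := lt_min hh (by linarith)
      have htend : Tendsto (fun t : ℝ => ((x.1, x.2 + t) : EuclideanSpace ℝ (Fin n) × ℝ))
          (𝓝[>] (0 : ℝ)) (𝓝 x) := by
        have hc : Continuous fun t : ℝ => ((x.1, x.2 + t) : EuclideanSpace ℝ (Fin n) × ℝ) := by
          continuity
        have := hc.tendsto 0
        simp only [add_zero] at this
        exact this.mono_left nhdsWithin_le_nhds
      refine mem_closure_of_tendsto htend ?_
      filter_upwards [Ioo_mem_nhdsGT_of_mem (⟨le_refl 0, hbpos⟩ : (0 : ℝ) ∈ Set.Ico 0 b)]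
        with t ht
      have ht1 : 0 < t := ht.1
      have ht2 : t < h₀ := lt_of_lt_of_le ht.2 (min_le_left _ _)
      have ht3 : t < ((ℓ : ℝ) + 1) * (h₀ / 10) + h₀ / 2 - x.2 :=
        lt_of_lt_of_le ht.2 (min_le_right _ _)
      refine ⟨Set.mem_iUnion.2 ⟨x, Set.mem_iUnion.2 ⟨⟨hxG, hxQ, hxI⟩, ?_⟩⟩, ?_⟩
      · refine ⟨?_, by simp [ht1], by simp [ht2]⟩
        simp only [sub_self, norm_zero, add_sub_cancel_left]
        exact mul_pos ht1 htan
      · simp only [Set.mem_setOf_eq]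
        linarith
    exact ⟨hcl, fun h => hnot (interior_subset h)⟩
  refine ⟨main, fun x hxG => ?_⟩
  set c : ℝ := (2 : ℝ) ^ p with hcdef
  have hc : 0 < c := by positivity
  set d : ℝ := h₀ / 10 with hddef
  have hd : 0 < d := by positivity
  set ℓ : ℤ := ⌊x.2 / d⌋ with hldef
  set m : Fin n → ℤ := fun i => ⌊x.1 i * c⌋ with hmdef
  have hx : x ∈ sliceSet G h₀ p m ℓ := by
    refine ⟨hxG, ?_, ?_⟩
    · intro i
      have h1 : ((⌊x.1 i * c⌋ : ℤ) : ℝ) ≤ x.1 i * c := Int.floor_le _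
      have h2 : x.1 i * c < (⌊x.1 i * c⌋ : ℝ) + 1 := Int.lt_floor_add_one _
      constructor
      · have := mul_le_mul_of_nonneg_right h1 (inv_nonneg.2 hc.le)
        rwa [mul_assoc, mul_inv_cancel₀ hc.ne', mul_one] at this
      · have := mul_le_mul_of_nonneg_right h2.le (inv_nonneg.2 hc.le)
        rwa [mul_assoc, mul_inv_cancel₀ hc.ne', mul_one] at this
    · constructor
      · have h1 : ((ℓ : ℤ) : ℝ) ≤ x.2 / d := Int.floor_le _
        exact (le_div_iff₀ hd).1 h1
      · have h2 : x.2 / d < (ℓ : ℝ) + 1 := Int.lt_floor_add_one _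
        exact (div_lt_iff₀ hd).1 h2
  exact Set.mem_iUnion.2 ⟨ℓ, Set.mem_iUnion.2 ⟨m, main ℓ m hx⟩⟩
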